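/- arXiv:1009.1851 — 2 statements merged into one kernel-verified Lean document; each statement's English description precedes it below -/
import Mathlib

section
/- Let X be a path-connected space all of whose finite cartesian powers are normal topological spaces. Then for every n ≥ 3, TC_n(X) − TC_{n-1}(X) ≤ cat(X²). -/
noncomputable section


/-- The space of "multipaths": `n` paths in `X` with a common initial point.  This is the
space `X^{J_n}` of continuous maps from the wedge `J_n` of `n` unit intervals to `X`. -/
abbrev MultiPath (n : ℕ) (X : Type*) [TopologicalSpace X] :=
  {f : Fin n → C(unitInterval, X) // ∀ i j : Fin n, f i 0 = f j 0}

/-- The endpoint-evaluation fibration `e_n : X^{J_n} → X^n`. -/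
def endpointsMap (n : ℕ) (X : Type*) [TopologicalSpace X] :
    C(MultiPath n X, Fin n → X) :=
  ⟨fun f i => f.1 i 1, by
    apply continuous_pi
    intro i
    exact (continuous_eval_const (1 : unitInterval)).comp
      ((continuous_apply i).comp continuous_subtype_val)⟩

/-- The diagonal map `d_n : X → X^n`. -/
def diagMap (n : ℕ) (X : Type*) [TopologicalSpace X] : C(X, Fin n → X) :=
  ⟨fun x _ => x, continuous_pi fun _ => continuous_id⟩

/-- `secatLE p k` : the base of `p` can be covered by `k+1` open sets, each admitting a
continuous (strict) local section of `p`. -/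
def secatLE {E B : Type*} [TopologicalSpace E] [TopologicalSpace B]
    (p : C(E, B)) (k : ℕ) : Prop :=
  ∃ U : Fin (k + 1) → Set B, (∀ i, IsOpen (U i)) ∧ (⋃ i, U i) = Set.univ ∧
    ∀ i, ∃ s : C(U i, E), ∀ x : U i, p (s x) = (x : B)

/-- The (normalized) sectional category / Schwarz genus of a fibration, via strict local
sections. -/
def secat {E B : Type*} [TopologicalSpace E] [TopologicalSpace B] (p : C(E, B)) : ℕ∞ :=
  sInf ((fun k : ℕ => (k : ℕ∞)) '' {k | secatLE p k})

/-- `genusLE f k` : the target of `f` can be covered by `k+1` open sets, each admitting a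
continuous local homotopy section of `f` (this computes the Schwarz genus of an arbitrary
map, i.e. of its fibrational substitute). -/
def genusLE {E B : Type*} [TopologicalSpace E] [TopologicalSpace B]
    (f : C(E, B)) (k : ℕ) : Prop :=
  ∃ U : Fin (k + 1) → Set B, (∀ i, IsOpen (U i)) ∧ (⋃ i, U i) = Set.univ ∧
    ∀ i, ∃ s : C(U i, E), ContinuousMap.Homotopic (f.comp s)
      ⟨fun x : U i => (x : B), continuous_subtype_val⟩

/-- The (normalized) Schwarz genus of an arbitrary continuous map, defined via local
homotopy sections (equivalently, via a fibrational substitute). -/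
def schwarzGenus {E B : Type*} [TopologicalSpace E] [TopologicalSpace B] (f : C(E, B)) : ℕ∞ :=
  sInf ((fun k : ℕ => (k : ℕ∞)) '' {k | genusLE f k})

/-- The `n`-th (normalized) topological complexity: the Schwarz genus of the endpoint
evaluation fibration `e_n : X^{J_n} → X^n`. -/
def TCn (n : ℕ) (X : Type*) [TopologicalSpace X] : ℕ∞ := secat (endpointsMap n X)

/-- `catLE Y k` : `Y` is covered by `k+1` open sets, each contractible in `Y`. -/
def catLE (Y : Type*) [TopologicalSpace Y] (k : ℕ) : Prop :=
  ∃ U : Fin (k + 1) → Set Y, (∀ i, IsOpen (U i)) ∧ (⋃ i, U i) = Set.univ ∧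
    ∀ i, ∃ y : Y, ContinuousMap.Homotopic
      ⟨fun x : U i => (x : Y), continuous_subtype_val⟩ (ContinuousMap.const _ y)

/-- The normalized Lusternik–Schnirelmann category. -/
def LScat (Y : Type*) [TopologicalSpace Y] : ℕ∞ :=
  sInf ((fun k : ℕ => (k : ℕ∞)) '' {k | catLE Y k})

/-!
Two comparisons with category hold for any path-connected `X`: a contraction of `U ⊆ Xⁿ` to a
diagonal point, run backwards, is a family of multipaths, so `TC_n(X) ≤ cat(Xⁿ)`; conversely a
multipath section over `U ⊆ X^{m+1}`, restricted to the slice `{b} × X^m`, contracts the slice, so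
`cat(X^m) ≤ TC_{m+1}(X)`. Normality gives the product inequality `cat(A × B) ≤ cat A + cat B`:
for bump functions `f_i`, `g_j` subordinate to categorical covers of `A` and `B`, the sets where
`f_i g_j` is positive and strictly beats every other product with the same `i + j` are open, lie
in `U_i × V_j` and are disjoint along each antidiagonal; their unions over the antidiagonals are a
categorical cover of `A × B`. Hence `TC_n(X) ≤ cat(X^{n-2} × X²) ≤ TC_{n-1}(X) + cat(X²)`.
-/

open Set Function ContinuousMap Topology
open scoped unitInterval

section ContractibleIn

variable {Y Z : Type*} [TopologicalSpace Y] [TopologicalSpace Z]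

def IsContractibleIn (s : Set Y) : Prop :=
  ((ContinuousMap.id Y).restrict s).Nullhomotopic

theorem catLE_iff {k : ℕ} :
    catLE Y k ↔ ∃ U : Fin (k + 1) → Set Y, (∀ i, IsOpen (U i)) ∧ (⋃ i, U i) = univ ∧
      ∀ i, IsContractibleIn (U i) :=
  Iff.rfl

namespace IsContractibleIn

variable {s t : Set Y}

theorem mono (ht : IsContractibleIn t) (hst : s ⊆ t) : IsContractibleIn s :=
  ht.comp_left (inclusion hst)

theorem homotopic_const [PathConnectedSpace Y] (hs : IsContractibleIn s) (y : Y) :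
    ((ContinuousMap.id Y).restrict s).Homotopic (ContinuousMap.const s y) :=
  let ⟨y', hy'⟩ := hs
  hy'.trans ⟨(PathConnectedSpace.somePath y' y).toHomotopyConst⟩

theorem prod {t : Set Z} (hs : IsContractibleIn s) (ht : IsContractibleIn t) :
    IsContractibleIn (s ×ˢ t) :=
  let ⟨y, hy⟩ := hs
  let ⟨z, hz⟩ := ht
  ⟨(y, z), (hy.prodMap hz).comp (.refl (Homeomorph.Set.prod s t : C(↥(s ×ˢ t), s × t)))⟩

theorem preimage_homeomorph (e : Z ≃ₜ Y) (hs : IsContractibleIn s) :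
    IsContractibleIn (e ⁻¹' s) := by
  have h : (ContinuousMap.id Z).restrict (e ⁻¹' s) = ((e.symm : C(Y, Z)).comp
      ((ContinuousMap.id Y).restrict s)).comp ((e : C(Z, Y)).restrictPreimage s) := by
    ext x
    exact (e.symm_apply_apply x).symm
  unfold IsContractibleIn
  rw [h]
  exact (hs.comp_right _).comp_left _

end IsContractibleIn

theorem catLE_of_homeomorph {k : ℕ} (e : Y ≃ₜ Z) (h : catLE Y k) : catLE Z k := by
  obtain ⟨U, hU, hcov, hc⟩ := h
  refine ⟨fun i => e.symm ⁻¹' U i, fun i => (hU i).preimage e.symm.continuous, ?_,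
    fun i => IsContractibleIn.preimage_homeomorph e.symm (hc i)⟩
  rw [← preimage_iUnion, hcov, preimage_univ]

/-- Path-connectedness lets all the contractions end at one point; on disjoint open pieces they
then glue. -/
theorem isContractibleIn_iUnion [PathConnectedSpace Y] {ι : Type*} {E : ι → Set Y}
    (hE : ∀ i, IsOpen (E i)) (hdisj : Pairwise (Disjoint on E))
    (h : ∀ i, IsContractibleIn (E i)) : IsContractibleIn (⋃ i, E i) := by
  obtain ⟨y₀⟩ := PathConnectedSpace.nonempty (X := Y)
  have F := fun i => ((h i).homotopic_const y₀).some
  let S : ι → Set (I × ↥(⋃ i, E i)) := fun i => {p | (p.2 : Y) ∈ E i}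
  let φ : ∀ i, C(S i, Y) := fun i =>
    ⟨fun p => F i (p.1.1, ⟨p.1.2, p.2⟩), by fun_prop⟩
  have hφ : ∀ i j p (hi : p ∈ S i) (hj : p ∈ S j), φ i ⟨p, hi⟩ = φ j ⟨p, hj⟩ := by
    intro i j p hi hj
    obtain rfl : i = j := hdisj.eq (not_disjoint_iff.2 ⟨_, hi, hj⟩)
    rfl
  have hS : ∀ p, ∃ i, S i ∈ 𝓝 p := fun p =>
    let ⟨i, hi⟩ := mem_iUnion.1 p.2.2
    ⟨i, ((hE i).preimage (continuous_subtype_val.comp continuous_snd)).mem_nhds hi⟩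
  refine ⟨y₀, ⟨⟨liftCover S φ hφ hS, fun x => ?_, fun x => ?_⟩⟩⟩
  · obtain ⟨i, hi⟩ := mem_iUnion.1 x.2
    exact (ContinuousMap.liftCover_coe (i := i) ⟨(0, x), hi⟩).trans ((F i).apply_zero _)
  · obtain ⟨i, hi⟩ := mem_iUnion.1 x.2
    exact (ContinuousMap.liftCover_coe (i := i) ⟨(1, x), hi⟩).trans ((F i).apply_one _)

end ContractibleIn

theorem sInf_natCast_image_le_add {R S T : Set ℕ} (h : ∀ a ∈ S, ∀ b ∈ T, a + b ∈ R) :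
    sInf ((fun k : ℕ => (k : ℕ∞)) '' R) ≤
      sInf ((fun k : ℕ => (k : ℕ∞)) '' S) + sInf ((fun k : ℕ => (k : ℕ∞)) '' T) := by
  rw [ENat.sInf_add]
  refine le_iInf₂ fun _ ⟨a, ha, hx⟩ => ?_
  rw [ENat.add_sInf]
  refine le_iInf₂ fun _ ⟨b, hb, hy⟩ => ?_
  subst hx hy
  exact sInf_le ⟨a + b, h a ha b hb, Nat.cast_add a b⟩

section MultiPath

variable {X Z : Type*} [TopologicalSpace X] [TopologicalSpace Z] {n : ℕ}

theorem exists_lift_endpointsMap_of_homotopic {f : C(Z, Fin n → X)} {g : C(Z, X)}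
    (h : ((diagMap n X).comp g).Homotopic f) :
    ∃ s : C(Z, MultiPath n X), (endpointsMap n X).comp s = f := by
  obtain ⟨H⟩ := h
  let paths : C(Z, C(I, Fin n → X)) := (H.toContinuousMap.comp .prodSwap).curry
  refine ⟨⟨fun z => ⟨fun i => (ContinuousMap.eval i).comp (paths z), fun i j => ?_⟩, ?_⟩, ?_⟩
  · change H (0, z) i = H (0, z) j
    rw [H.apply_zero]
    rfl
  · exact (continuous_pi fun i => (continuous_postcomp _).comp paths.continuous).subtype_mk _
  · ext z i
    simp [paths, endpointsMap]

theorem exists_homotopic_of_lift_endpointsMap (s : C(Z, MultiPath (n + 1) X)) :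
    ∃ g : C(Z, X), ((diagMap (n + 1) X).comp g).Homotopic ((endpointsMap (n + 1) X).comp s) := by
  have hs : ∀ i, Continuous fun z => (s z).1 i := fun i =>
    (continuous_apply i).comp (continuous_subtype_val.comp s.continuous)
  refine ⟨⟨fun z => (s z).1 0 0, (continuous_eval_const 0).comp (hs 0)⟩,
    ⟨⟨⟨fun p i => (s p.2).1 i p.1, continuous_pi fun i =>
      continuous_eval.comp (((hs i).comp continuous_snd).prodMk continuous_fst)⟩,
      fun z => ?_, fun z => rfl⟩⟩⟩
  funext i
  exact (s z).2 i 0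

end MultiPath

section TCBounds

variable {X : Type*} [TopologicalSpace X] {n k : ℕ}

theorem secatLE_endpointsMap_of_catLE [PathConnectedSpace X] (h : catLE (Fin n → X) k) :
    secatLE (endpointsMap n X) k := by
  obtain ⟨U, hU, hcov, hc⟩ := h
  obtain ⟨x₀⟩ := PathConnectedSpace.nonempty (X := X)
  refine ⟨U, hU, hcov, fun i => ?_⟩
  obtain ⟨s, hs⟩ := exists_lift_endpointsMap_of_homotopic (g := ContinuousMap.const _ x₀)
    ((IsContractibleIn.homotopic_const (hc i) (diagMap n X x₀)).symm)
  exact ⟨s, fun x => DFunLike.congr_fun hs x⟩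

theorem catLE_of_secatLE_endpointsMap [Nonempty X] (h : secatLE (endpointsMap (n + 1) X) k) :
    catLE (Fin n → X) k := by
  obtain ⟨b⟩ := ‹Nonempty X›
  obtain ⟨U, hU, hcov, hsec⟩ := h
  let j : C(Fin n → X, Fin (n + 1) → X) :=
    ⟨fun x => Fin.cons b x, continuous_const.finCons continuous_id⟩
  let head : C(Fin (n + 1) → X, X) := ContinuousMap.eval 0
  let tail : C(Fin (n + 1) → X, Fin n → X) := ⟨Fin.tail, by fun_prop⟩
  refine catLE_iff.2 ⟨fun i => j ⁻¹' U i, fun i => (hU i).preimage j.continuous, ?_, fun i => ?_⟩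
  · rw [← preimage_iUnion, hcov, preimage_univ]
  dsimp only
  obtain ⟨s, hs⟩ := hsec i
  let F := (endpointsMap (n + 1) X).comp (s.comp (j.restrictPreimage (U i)))
  have hF : ∀ x, F x = Fin.cons b x := fun x => hs _
  obtain ⟨g, hg⟩ := exists_homotopic_of_lift_endpointsMap (s.comp (j.restrictPreimage (U i)))
  have h_tail : (ContinuousMap.id _).restrict (j ⁻¹' U i) = tail.comp F := by
    ext x : 1
    simp [tail, hF]
  have h_head : ((diagMap n X).comp head).comp F = ContinuousMap.const _ (diagMap n X b) := by
    ext x : 1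
    simp [head, hF]
  refine ⟨diagMap n X b, ?_⟩
  rw [h_tail, ← h_head]
  have h_tail_diag : (tail.comp F).Homotopic (tail.comp ((diagMap (n + 1) X).comp g)) :=
    (Homotopic.refl tail).comp hg.symm
  have h_head_diag : (((diagMap n X).comp head).comp ((diagMap (n + 1) X).comp g)).Homotopic
      (((diagMap n X).comp head).comp F) :=
    (Homotopic.refl _).comp hg
  exact h_tail_diag.trans h_head_diag

end TCBounds

section ProductInequality

theorem Finite.exists_last_argmax {ι : Type*} [LinearOrder ι] [Finite ι] [Nonempty ι]
    (f : ι → ℝ) : ∃ i, ∀ j, f j ≤ f i ∧ (i < j → f j < f i) := by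
  obtain ⟨i, hi⟩ := Finite.exists_max fun i => toLex (f i, i)
  refine ⟨i, fun j => ?_⟩
  rcases Prod.Lex.toLex_le_toLex.1 (hi j) with hlt | ⟨heq, hle⟩
  · exact ⟨hlt.le, fun _ => hlt⟩
  · exact ⟨heq.le, fun hij => absurd hle (not_le.2 hij)⟩

/-- Maximise `f` and `g` separately at their largest maximisers `i, j`: on the antidiagonal of
`(i, j)`, any other pair has a larger first or second index, hence a strictly smaller factor. -/
theorem exists_antidiagonal_strict_max {m l : ℕ} (f : Fin m → ℝ) (g : Fin l → ℝ)
    (hf : ∀ i, 0 ≤ f i) (hg : ∀ j, 0 ≤ g j) (hf₀ : ∃ i, 0 < f i) (hg₀ : ∃ j, 0 < g j) :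
    ∃ p : Fin m × Fin l, 0 < f p.1 * g p.2 ∧
      ∀ q ≠ p, (q.1 : ℕ) + q.2 = p.1 + p.2 → f q.1 * g q.2 < f p.1 * g p.2 := by
  obtain ⟨i₀, hi₀⟩ := hf₀
  obtain ⟨j₀, hj₀⟩ := hg₀
  have : Nonempty (Fin m) := ⟨i₀⟩
  have : Nonempty (Fin l) := ⟨j₀⟩
  obtain ⟨i, hi⟩ := Finite.exists_last_argmax f
  obtain ⟨j, hj⟩ := Finite.exists_last_argmax g
  have hfi : 0 < f i := hi₀.trans_le (hi i₀).1
  have hgj : 0 < g j := hj₀.trans_le (hj j₀).1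
  refine ⟨(i, j), mul_pos hfi hgj, fun q hq hsum => ?_⟩
  rcases lt_or_ge i q.1 with hiq | hqi
  · exact (mul_le_mul_of_nonneg_left (hj q.2).1 (hf _)).trans_lt
      (mul_lt_mul_of_pos_right ((hi q.1).2 hiq) hgj)
  · have hjq : j < q.2 := by
      by_contra! hqj
      rw [Fin.le_def] at hqi hqj
      dsimp only at hsum
      exact hq (Prod.ext (Fin.ext (show (q.1 : ℕ) = i by omega))
        (Fin.ext (show (q.2 : ℕ) = j by omega)))
    exact (mul_le_mul_of_nonneg_right (hi q.1).1 (hg _)).trans_lt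
      (mul_lt_mul_of_pos_left ((hj q.2).2 hjq) hfi)

variable {A B : Type*} [TopologicalSpace A] [TopologicalSpace B]

theorem exists_antidiagonal_disjoint_shrinking [NormalSpace A] [NormalSpace B] {m l : ℕ}
    {U : Fin m → Set A} {V : Fin l → Set B} (hU : ∀ i, IsOpen (U i)) (hUcov : (⋃ i, U i) = univ)
    (hV : ∀ j, IsOpen (V j)) (hVcov : (⋃ j, V j) = univ) :
    ∃ E : Fin m × Fin l → Set (A × B), (∀ p, IsOpen (E p)) ∧ (∀ p, E p ⊆ U p.1 ×ˢ V p.2) ∧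
      (⋃ p, E p) = univ ∧
      ∀ p q, p ≠ q → (p.1 : ℕ) + p.2 = q.1 + q.2 → Disjoint (E p) (E q) := by
  obtain ⟨f, hf⟩ := BumpCovering.exists_isSubordinate_of_locallyFinite isClosed_univ U hU
    (locallyFinite_of_finite U) hUcov.ge
  obtain ⟨g, hg⟩ := BumpCovering.exists_isSubordinate_of_locallyFinite isClosed_univ V hV
    (locallyFinite_of_finite V) hVcov.ge
  let φ : Fin m × Fin l → A × B → ℝ := fun p z => f p.1 z.1 * g p.2 z.2
  have hφ : ∀ p, Continuous (φ p) := fun p => by fun_prop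
  let E : Fin m × Fin l → Set (A × B) := fun p =>
    {z | 0 < φ p z} ∩ ⋂ q ∈ {q | q ≠ p ∧ (q.1 : ℕ) + q.2 = p.1 + p.2}, {z | φ q z < φ p z}
  refine ⟨E, fun p => ?_, fun p z hz => ?_, eq_univ_of_forall fun z => ?_, fun p q hpq hsum => ?_⟩
  · exact (isOpen_lt continuous_const (hφ p)).inter
      ((toFinite _).isOpen_biInter fun q _ => isOpen_lt (hφ q) (hφ p))
  · have hpos : 0 < f p.1 z.1 * g p.2 z.2 := hz.1
    exact ⟨hf p.1 (subset_tsupport _ (left_ne_zero_of_mul hpos.ne')),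
      hg p.2 (subset_tsupport _ (right_ne_zero_of_mul hpos.ne'))⟩
  · obtain ⟨p, hpos, hmax⟩ := exists_antidiagonal_strict_max (f · z.1) (g · z.2)
      (fun i => f.nonneg i z.1) (fun j => g.nonneg j z.2)
      ⟨_, (f.ind_apply z.1 trivial).symm ▸ one_pos⟩ ⟨_, (g.ind_apply z.2 trivial).symm ▸ one_pos⟩
    exact mem_iUnion.2 ⟨p, hpos, mem_iInter₂.2 fun q hq => hmax q hq.1 hq.2⟩
  · refine disjoint_left.2 fun z hzp hzq => ?_
    have hq_lt : φ q z < φ p z := mem_iInter₂.1 hzp.2 q ⟨hpq.symm, hsum.symm⟩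
    have hp_lt : φ p z < φ q z := mem_iInter₂.1 hzq.2 p ⟨hpq, hsum⟩
    exact lt_asymm hq_lt hp_lt

theorem catLE_prod [NormalSpace A] [NormalSpace B] [PathConnectedSpace A] [PathConnectedSpace B]
    {a b : ℕ} (ha : catLE A a) (hb : catLE B b) : catLE (A × B) (a + b) := by
  obtain ⟨U, hU, hUcov, hUc⟩ := ha
  obtain ⟨V, hV, hVcov, hVc⟩ := hb
  obtain ⟨E, hE, hEsub, hEcov, hEdisj⟩ := exists_antidiagonal_disjoint_shrinking hU hUcov hV hVcov
  let W : Fin (a + b + 1) → Set (A × B) := fun k =>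
    ⋃ p : {p : Fin (a + 1) × Fin (b + 1) // (p.1 : ℕ) + p.2 = k}, E p
  refine catLE_iff.2 ⟨W, fun k => isOpen_iUnion fun p => hE p, eq_univ_of_forall fun z => ?_,
    fun k => isContractibleIn_iUnion (fun p => hE p) (fun p q hpq => ?_) fun p => ?_⟩
  · obtain ⟨p, hp⟩ := mem_iUnion.1 (hEcov ▸ mem_univ z)
    have hk : (p.1 : ℕ) + p.2 < a + b + 1 := by omega
    exact mem_iUnion.2 ⟨⟨_, hk⟩, mem_iUnion.2 ⟨⟨p, rfl⟩, hp⟩⟩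
  · exact hEdisj p q (Subtype.coe_ne_coe.2 hpq) (p.2.trans q.2.symm)
  · exact (IsContractibleIn.prod (hUc p.1.1) (hVc p.1.2)).mono (hEsub p)

end ProductInequality

theorem TC_succ_diff_le_cat_sq_general (n : ℕ) (hn : 3 ≤ n) (X : Type*) [TopologicalSpace X]
    [PathConnectedSpace X]
    (hnorm : ∀ k : ℕ, NormalSpace (Fin k → X)) :
    TCn n X - TCn (n - 1) X ≤ LScat (X × X) := by
  obtain ⟨m, rfl⟩ : ∃ m, n = m + 2 := ⟨n - 2, by omega⟩
  have : NormalSpace (Fin m → X) := hnorm m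
  have : NormalSpace (Fin 2 → X) := hnorm 2
  rw [tsub_le_iff_left]
  refine sInf_natCast_image_le_add fun a ha b hb => ?_
  have h_pow : catLE (Fin m → X) a := catLE_of_secatLE_endpointsMap ha
  have h_sq : catLE (Fin 2 → X) b := catLE_of_homeomorph Homeomorph.finTwoArrow.symm hb
  exact secatLE_endpointsMap_of_catLE
    (catLE_of_homeomorph (Fin.appendHomeomorph m 2) (catLE_prod h_pow h_sq))

/-- For a path-connected space `X` all of whose finite cartesian powers are
normal (Hausdorff) spaces, and `n ≥ 3`: `TC_n(X) − TC_{n-1}(X) ≤ cat(X²)`. -/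
theorem TC_succ_diff_le_cat_sq (n : ℕ) (hn : 3 ≤ n) (X : Type*) [TopologicalSpace X]
    [PathConnectedSpace X]
    (hnorm : ∀ k : ℕ, NormalSpace (Fin k → X)) (hT2 : ∀ k : ℕ, T2Space (Fin k → X)) :
    TCn n X - TCn (n - 1) X ≤ LScat (X × X) :=
  TC_succ_diff_le_cat_sq_general n hn X hnorm
end
end

section
/- Let X and Y be path-connected spaces such that (X × Y)^n is a normal topological space. Then TC_n(X × Y) ≤ TC_n(X) + TC_n(Y). -/
/-!
Under `(X × Y)^n ≅ X^n × Y^n` the endpoint fibration of `X × Y` becomes the product of those of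
`X` and `Y`, so it suffices to show `secat (p × q) ≤ secat p + secat q` over a normal base.
If `p` has local sections over an open cover `U_0, …, U_a` and `q` over `V_0, …, V_b`, then
`p × q` has local sections over every `U_i × V_j`. Choose partitions of unity `ρ_i`, `σ_j`
subordinate to the two covers and let `O_ij` be the set where `ρ_i σ_j` is positive and strictly
larger than every other `ρ_k σ_l` of the same level `k + l = i + j`. Sets of the same level are
disjoint, so the sections glue over `W_m = ⋃_{i+j=m} O_ij`, and the `a + b + 1` sets `W_m` cover
the base: at any point, a maximiser of `ρ_i σ_j` of minimal level is strictly maximal within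
its level.
-/

noncomputable section


open Set Function

lemma exists_mul_lt_of_level_eq {a b : ℕ} (x : Fin (a + 1) → ℝ) (y : Fin (b + 1) → ℝ)
    (hx : ∀ i, 0 ≤ x i) (hy : ∀ j, 0 ≤ y j) (hpos : ∃ i j, 0 < x i * y j) :
    ∃ i j, 0 < x i * y j ∧ ∀ k l, (k, l) ≠ (i, j) → k.val + l.val = i.val + j.val →
      x k * y l < x i * y j := by
  obtain ⟨i₀, j₀, h₀⟩ := hpos
  obtain ⟨m, -, hm⟩ := Finset.exists_max_image Finset.univ (fun kl => x kl.1 * y kl.2)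
    ⟨(i₀, j₀), Finset.mem_univ _⟩
  replace hm : ∀ k l, x k * y l ≤ x m.1 * y m.2 := fun k l => hm (k, l) (Finset.mem_univ _)
  set M := x m.1 * y m.2
  have hM : 0 < M := h₀.trans_le (hm i₀ j₀)
  set T := Finset.univ.filter fun kl : Fin (a + 1) × Fin (b + 1) => x kl.1 * y kl.2 = M
  obtain ⟨⟨i, j⟩, hijT, hmin⟩ := Finset.exists_min_image T (fun kl => kl.1.val + kl.2.val)
    ⟨m, by simp [T, M]⟩
  have hij : x i * y j = M := (Finset.mem_filter.1 hijT).2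
  refine ⟨i, j, hij ▸ hM, fun k l hne hlev => hij ▸ (hm k l).lt_of_ne fun hkl => hne ?_⟩
  have pos_of_mul {u v : ℝ} (hu : 0 ≤ u) (hv : 0 ≤ v) (huv : 0 < u * v) : 0 < u ∧ 0 < v :=
    ⟨hu.lt_of_ne (by rintro rfl; simp at huv), hv.lt_of_ne (by rintro rfl; simp at huv)⟩
  obtain ⟨hxi, hyj⟩ := pos_of_mul (hx i) (hy j) (hij ▸ hM)
  obtain ⟨hxk, hyl⟩ := pos_of_mul (hx k) (hy l) (hkl ▸ hM)
  -- The cross terms are `≤ M` with product `M ^ 2`, so they are maximal too.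
  have hprod : (x i * y l) * (x k * y j) = M * M := by
    calc (x i * y l) * (x k * y j) = (x i * y j) * (x k * y l) := by ring
      _ = M * M := by rw [hij, hkl]
  have hcross₁ : x i * y l = M := by
    nlinarith [hm i l, hm k j, mul_pos hxi hyl, mul_pos hxk hyj]
  have hcross₂ : x k * y j = M := by
    nlinarith [hm i l, hm k j, mul_pos hxi hyl, mul_pos hxk hyj]
  have e₁ := hmin (i, l) (by simp [T, hcross₁])
  have e₂ := hmin (k, j) (by simp [T, hcross₂])
  simp only at e₁ e₂
  simp only [Prod.mk.injEq, Fin.ext_iff]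
  omega

section Refinement

variable {B : Type*} [TopologicalSpace B]

theorem exists_open_refinement_levelwise_disjoint [NormalSpace B] {a b : ℕ}
    {U : Fin (a + 1) → Set B} {V : Fin (b + 1) → Set B}
    (hUo : ∀ i, IsOpen (U i)) (hVo : ∀ j, IsOpen (V j))
    (hUc : ⋃ i, U i = univ) (hVc : ⋃ j, V j = univ) :
    ∃ O : Fin (a + 1) → Fin (b + 1) → Set B, (∀ i j, IsOpen (O i j)) ∧
      ⋃ i, ⋃ j, O i j = univ ∧ (∀ i j, O i j ⊆ U i ∩ V j) ∧
      ∀ i j k l, (k, l) ≠ (i, j) → k.val + l.val = i.val + j.val → Disjoint (O i j) (O k l) := by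
  obtain ⟨ρ, hρ⟩ := PartitionOfUnity.exists_isSubordinate_of_locallyFinite isClosed_univ U hUo
    (locallyFinite_of_finite _) hUc.symm.subset
  obtain ⟨σ, hσ⟩ := PartitionOfUnity.exists_isSubordinate_of_locallyFinite isClosed_univ V hVo
    (locallyFinite_of_finite _) hVc.symm.subset
  refine ⟨fun i j => {z | 0 < ρ i z * σ j z ∧ ∀ k l, (k, l) ≠ (i, j) →
    k.val + l.val = i.val + j.val → ρ k z * σ l z < ρ i z * σ j z}, fun i j => ?_, ?_, ?_, ?_⟩
  · simp only [ofPred_and, ofPred_forall]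
    exact (isOpen_lt (by fun_prop) (by fun_prop)).inter <| isOpen_iInter_of_finite fun k =>
      isOpen_iInter_of_finite fun l => isOpen_iInter_of_finite fun _ =>
        isOpen_iInter_of_finite fun _ => isOpen_lt (by fun_prop) (by fun_prop)
  · refine eq_univ_of_forall fun z => ?_
    obtain ⟨i, hi⟩ := ρ.exists_pos (mem_univ z)
    obtain ⟨j, hj⟩ := σ.exists_pos (mem_univ z)
    obtain ⟨i, j, hz⟩ := exists_mul_lt_of_level_eq (ρ · z) (σ · z) (ρ.nonneg · z) (σ.nonneg · z)
      ⟨i, j, mul_pos hi hj⟩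
    exact mem_iUnion₂.2 ⟨i, j, hz⟩
  · intro i j z ⟨hz, _⟩
    exact ⟨hρ i (subset_tsupport _ (left_ne_zero_of_mul hz.ne')),
      hσ j (subset_tsupport _ (right_ne_zero_of_mul hz.ne'))⟩
  · intro i j k l hne hlev
    refine disjoint_left.2 fun z ⟨_, hij⟩ ⟨_, hkl⟩ => ?_
    exact (hij k l hne hlev).not_gt (hkl i j hne.symm hlev.symm)

end Refinement

section LocalSections

variable {E E' B B' : Type*} [TopologicalSpace E] [TopologicalSpace E'] [TopologicalSpace B]
  [TopologicalSpace B']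

def HasLocalSection (p : C(E, B)) (W : Set B) : Prop :=
  ∃ s : C(W, E), ∀ x : W, p (s x) = x

theorem HasLocalSection.mono {p : C(E, B)} {W W' : Set B} (h : HasLocalSection p W)
    (hW : W' ⊆ W) : HasLocalSection p W' :=
  let ⟨s, hs⟩ := h
  ⟨s.comp ⟨inclusion hW, continuous_inclusion hW⟩, fun _ => hs _⟩

theorem HasLocalSection.iUnion {ι : Type*} {p : C(E, B)} {O : ι → Set B}
    (hO : ∀ i, IsOpen (O i)) (hd : Pairwise (Disjoint on O))
    (hs : ∀ i, HasLocalSection p (O i)) : HasLocalSection p (⋃ i, O i) := by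
  choose s hs using hs
  refine ⟨ContinuousMap.liftCover (fun i => ((↑) : ↥(⋃ i, O i) → B) ⁻¹' O i)
    (fun i => (s i).comp ⟨fun x => ⟨x.1, x.2⟩, by fun_prop⟩) ?_ ?_, ?_⟩
  · intro i j x hxi hxj
    obtain rfl : i = j := hd.eq (not_disjoint_iff.2 ⟨x, hxi, hxj⟩)
    rfl
  · intro x
    obtain ⟨i, hi⟩ := mem_iUnion.1 x.2
    exact ⟨i, ((hO i).preimage continuous_subtype_val).mem_nhds hi⟩
  · intro x
    obtain ⟨i, hi⟩ := mem_iUnion.1 x.2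
    exact (congrArg p (ContinuousMap.liftCover_coe (i := i) ⟨x, hi⟩)).trans (hs i _)

theorem HasLocalSection.prodMap {E₂ B₂ : Type*} [TopologicalSpace E₂] [TopologicalSpace B₂]
    {p : C(E, B)} {q : C(E₂, B₂)} {U : Set B} {V : Set B₂} (hp : HasLocalSection p U)
    (hq : HasLocalSection q V) : HasLocalSection (p.prodMap q) (U ×ˢ V) :=
  let ⟨s, hs⟩ := hp
  let ⟨t, ht⟩ := hq
  ⟨(s.prodMap t).comp ⟨fun x => (⟨x.1.1, x.2.1⟩, ⟨x.1.2, x.2.2⟩), by fun_prop⟩,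
    fun x => Prod.ext (hs _) (ht _)⟩

theorem HasLocalSection.pullback {p : C(E, B)} {r : C(E', B')} (g : C(B', B)) (μ : C(E, E'))
    (hμ : ∀ e b', p e = g b' → r (μ e) = b') {W : Set B} (h : HasLocalSection p W) :
    HasLocalSection r (g ⁻¹' W) :=
  let ⟨s, hs⟩ := h
  ⟨μ.comp (s.comp ⟨fun x => ⟨g x, x.2⟩, by fun_prop⟩), fun x => hμ _ _ (hs _)⟩

end LocalSections

section Secat

variable {E E' E₂ B B' B₂ : Type*} [TopologicalSpace E] [TopologicalSpace E']
  [TopologicalSpace E₂] [TopologicalSpace B] [TopologicalSpace B'] [TopologicalSpace B₂]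

theorem secatLE_add_of_hasLocalSection_inter [NormalSpace B] {p : C(E, B)} {a b : ℕ}
    {U : Fin (a + 1) → Set B} {V : Fin (b + 1) → Set B}
    (hUo : ∀ i, IsOpen (U i)) (hVo : ∀ j, IsOpen (V j))
    (hUc : ⋃ i, U i = univ) (hVc : ⋃ j, V j = univ)
    (hs : ∀ i j, HasLocalSection p (U i ∩ V j)) :
    secatLE p (a + b) := by
  obtain ⟨O, hOo, hOc, hOsub, hOdisj⟩ :=
    exists_open_refinement_levelwise_disjoint hUo hVo hUc hVc
  let level (m : Fin (a + b + 1)) :=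
    {ij : Fin (a + 1) × Fin (b + 1) // ij.1.val + ij.2.val = m}
  refine ⟨fun m => ⋃ ij : level m, O ij.1.1 ij.1.2, fun m => isOpen_iUnion fun _ => hOo _ _,
    eq_univ_of_forall fun z => ?_, fun m => HasLocalSection.iUnion (fun _ => hOo _ _) ?_
      fun ij => (hs _ _).mono (hOsub _ _)⟩
  · obtain ⟨i, j, hz⟩ := mem_iUnion₂.1 (hOc ▸ mem_univ z)
    exact mem_iUnion₂.2 ⟨⟨i + j, by omega⟩, ⟨(i, j), rfl⟩, hz⟩
  · rintro ⟨⟨i, j⟩, hij⟩ ⟨⟨k, l⟩, hkl⟩ hne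
    exact hOdisj i j k l (fun h => hne (Subtype.ext h.symm)) (by simp only at hij hkl; omega)

theorem secatLE_prodMap [NormalSpace (B × B₂)] {p : C(E, B)} {q : C(E₂, B₂)} {a b : ℕ}
    (hp : secatLE p a) (hq : secatLE q b) : secatLE (p.prodMap q) (a + b) := by
  obtain ⟨U, hUo, hUc, hU⟩ := hp
  obtain ⟨V, hVo, hVc, hV⟩ := hq
  exact secatLE_add_of_hasLocalSection_inter (U := fun i => Prod.fst ⁻¹' U i)
    (V := fun j => Prod.snd ⁻¹' V j) (fun i => (hUo i).preimage continuous_fst)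
    (fun j => (hVo j).preimage continuous_snd) (by rw [← preimage_iUnion, hUc, preimage_univ])
    (by rw [← preimage_iUnion, hVc, preimage_univ])
    fun i j => HasLocalSection.prodMap (hU i) (hV j)

theorem secatLE.pullback {p : C(E, B)} {r : C(E', B')} (g : C(B', B)) (μ : C(E, E'))
    (hμ : ∀ e b', p e = g b' → r (μ e) = b') {k : ℕ} (h : secatLE p k) : secatLE r k :=
  let ⟨U, hUo, hUc, hU⟩ := h
  ⟨fun i => g ⁻¹' U i, fun i => (hUo i).preimage g.continuous,
    by rw [← preimage_iUnion, hUc, preimage_univ],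
    fun i => HasLocalSection.pullback g μ hμ (hU i)⟩

theorem secat_le_of_secatLE {p : C(E, B)} {k : ℕ} (h : secatLE p k) : secat p ≤ k :=
  sInf_le ⟨k, h, rfl⟩

theorem secat_eq_top_or_exists_secatLE (p : C(E, B)) :
    secat p = ⊤ ∨ ∃ k : ℕ, secatLE p k ∧ (k : ℕ∞) = secat p := by
  rcases ((fun k : ℕ => (k : ℕ∞)) '' {k | secatLE p k}).eq_empty_or_nonempty with h | h
  · left
    rw [secat, h, sInf_empty]
  · exact .inr (csInf_mem h)

theorem secat_le_add_of_secatLE_add {p : C(E, B)} {q : C(E₂, B₂)} {r : C(E', B')}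
    (h : ∀ a b, secatLE p a → secatLE q b → secatLE r (a + b)) :
    secat r ≤ secat p + secat q := by
  rcases secat_eq_top_or_exists_secatLE p with hp | ⟨a, ha, hpa⟩
  · simp [hp]
  rcases secat_eq_top_or_exists_secatLE q with hq | ⟨b, hb, hqb⟩
  · simp [hq]
  rw [← hpa, ← hqb]
  exact_mod_cast secat_le_of_secatLE (h a b ha hb)

end Secat

def Homeomorph.arrowProdHomeomorphProdArrow (ι X Y : Type*) [TopologicalSpace X]
    [TopologicalSpace Y] : (ι → X × Y) ≃ₜ (ι → X) × (ι → Y) where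
  toEquiv := Equiv.arrowProdEquivProdArrow ι (fun _ => X) (fun _ => Y)
  continuous_toFun := by dsimp [Equiv.arrowProdEquivProdArrow]; fun_prop
  continuous_invFun := by dsimp [Equiv.arrowProdEquivProdArrow]; fun_prop

theorem MultiPath.continuous_apply {n : ℕ} {X : Type*} [TopologicalSpace X] (i : Fin n) :
    Continuous fun f : MultiPath n X => f.1 i :=
  (_root_.continuous_apply i).comp continuous_subtype_val

def MultiPath.prod (n : ℕ) (X Y : Type*) [TopologicalSpace X] [TopologicalSpace Y] :
    C(MultiPath n X × MultiPath n Y, MultiPath n (X × Y)) where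
  toFun fg := ⟨fun i => (fg.1.1 i).prodMk (fg.2.1 i),
    fun i j => Prod.ext (fg.1.2 i j) (fg.2.2 i j)⟩
  continuous_toFun := by
    refine .subtype_mk (continuous_pi fun i =>
      ContinuousMap.continuous_of_continuous_uncurry _ ?_) _
    exact .prodMk ((MultiPath.continuous_apply i).comp continuous_fst.fst |>.eval continuous_snd)
      ((MultiPath.continuous_apply i).comp continuous_fst.snd |>.eval continuous_snd)

theorem TC_prod_le_general (n : ℕ) (X Y : Type*) [TopologicalSpace X] [TopologicalSpace Y]
    [NormalSpace (Fin n → X × Y)] :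
    TCn n (X × Y) ≤ TCn n X + TCn n Y := by
  let e := Homeomorph.arrowProdHomeomorphProdArrow (Fin n) X Y
  have := e.normalSpace
  refine secat_le_add_of_secatLE_add fun a b ha hb =>
    (secatLE_prodMap ha hb).pullback e (MultiPath.prod n X Y) fun fg z hz => ?_
  funext i
  exact Prod.ext (congrFun (congrArg Prod.fst hz) i) (congrFun (congrArg Prod.snd hz) i)

/-- For path-connected spaces `X`, `Y` with `(X × Y)^n` normal (Hausdorff),
`TC_n(X × Y) ≤ TC_n(X) + TC_n(Y)`. -/
theorem TC_prod_le (n : ℕ) (hn : 2 ≤ n) (X Y : Type*) [TopologicalSpace X] [TopologicalSpace Y]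
    [PathConnectedSpace X] [PathConnectedSpace Y]
    [NormalSpace (Fin n → X × Y)] [T2Space (Fin n → X × Y)] :
    TCn n (X × Y) ≤ TCn n X + TCn n Y :=
  TC_prod_le_general n X Y
end
end
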